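/- arXiv:2507.07353 — 2 statements merged into one kernel-verified Lean document; each statement's English description precedes it below -/
import Mathlib

section
/- Pointwise bound on the gain term (Lemma 2.1, inequality (gamma_upper)). Let 0 < ϑ < 1/4 and w(v) := e^{ϑ|v|²}. There exists a constant C = C(ϑ) > 0 such that for every measurable g : ℝ³ → ℝ with ‖wg‖_∞ := ess sup_v |w(v)g(v)| < ∞ and every v ∈ ℝ³, the integral Γ_gain(g,g)(v) converges absolutely and |Γ_gain(g,g)(v)| ≤ C ‖wg‖_∞². -/
open MeasureTheory Set
open scoped RealInnerProductSpace

noncomputable section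

abbrev E3 : Type := EuclideanSpace ℝ (Fin 3)

/-- Surface measure on the unit sphere `S² ⊂ ℝ³`: the two-dimensional Hausdorff measure
restricted to the sphere. -/
def sphMeas : Measure E3 := (μH[(2 : ℝ)]).restrict (Metric.sphere (0 : E3) 1)

/-- The Japanese bracket `⟨v⟩ = √(1+|v|²)`. -/
def jap (v : E3) : ℝ := Real.sqrt (1 + ‖v‖ ^ 2)

/-- The hard-sphere collision frequency
`ν(g)(v) = ∫_{ℝ³}∫_{S²₊} |(v−u)·ω| e^{−|u|²/4} g(u) dω du`. -/
def nuOp (g : E3 → ℝ) (v : E3) : ℝ :=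
  ∫ u : E3, ∫ ω in {ω : E3 | 0 < ⟪v - u, ω⟫},
    |⟪v - u, ω⟫| * Real.exp (-(‖u‖ ^ 2 / 4)) * g u ∂sphMeas

/-- The hard-sphere gain operator
`Γ_gain(g,g)(v) = e^{|v|²/4} ∫_{ℝ³}∫_{S²₊} |(v−u)·ω| e^{−|u'|²/4} g(u') e^{−|v'|²/4} g(v') dω du`
with `u' = u + ((v−u)·ω)ω` and `v' = v − ((v−u)·ω)ω`. -/
def gainOp (g : E3 → ℝ) (v : E3) : ℝ :=
  Real.exp (‖v‖ ^ 2 / 4) *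
    ∫ u : E3, ∫ ω in {ω : E3 | 0 < ⟪v - u, ω⟫},
      |⟪v - u, ω⟫|
        * Real.exp (-(‖u + ⟪v - u, ω⟫ • ω‖ ^ 2 / 4)) * g (u + ⟪v - u, ω⟫ • ω)
        * Real.exp (-(‖v - ⟪v - u, ω⟫ • ω‖ ^ 2 / 4)) * g (v - ⟪v - u, ω⟫ • ω) ∂sphMeas

/-!
By energy conservation `|u'|² + |v'|² = |u|² + |v|²`, the pointwise bound `|g| ≤ M e^{-ϑ|·|²}`
turns the integrand into at most `M² (|u| + |v|) e^{-(1/4 + ϑ)(|u|² + |v|²)}`, uniformly in `ω`.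
After multiplication by `e^{|v|²/4}` what is left in `v` is `(1 + |v|²) e^{-ϑ|v|²}`, bounded
because `ϑ > 0`, times a Gaussian in `u`. The sphere has finite surface measure, being the image
of a square under the (Lipschitz) spherical coordinates.
-/

open Real

lemma abs_le_mul_exp_neg_of_abs_exp_mul_le {a y M : ℝ} (h : |exp a * y| ≤ M) :
    |y| ≤ M * exp (-a) := by
  rw [abs_mul, abs_of_pos (exp_pos a)] at h
  rw [exp_neg, ← div_eq_mul_inv, le_div_iff₀ (exp_pos a)]
  linarith

lemma one_add_mul_exp_neg_mul_le {c s : ℝ} (hc : 0 < c) (hs : 0 ≤ s) :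
    (1 + s) * exp (-(c * s)) ≤ (c + 1) / c := by
  rw [le_div_iff₀ hc, exp_neg, ← div_eq_mul_inv, div_mul_eq_mul_div,
    div_le_iff₀ (exp_pos _)]
  nlinarith [add_one_le_exp (c * s), one_le_exp (mul_nonneg hc.le hs)]

lemma integrable_exp_neg_mul_sq_norm {V : Type*} [NormedAddCommGroup V] [InnerProductSpace ℝ V]
    [FiniteDimensional ℝ V] [MeasurableSpace V] [BorelSpace V] {b : ℝ} (hb : 0 < b) :
    Integrable fun v : V => exp (-(b * ‖v‖ ^ 2)) := by
  have h := (GaussianFourier.integrable_cexp_neg_mul_sq_norm_add (V := V) (b := b)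
    (by simpa using hb) 0 0).norm
  refine h.congr (ae_of_all _ fun v => ?_)
  simp only [Complex.norm_exp, zero_mul, add_zero]
  norm_cast
  rw [neg_mul]

def sphericalCoords (p : Fin 2 → ℝ) : E3 :=
  WithLp.toLp 2 ![sin (p 0) * cos (p 1), sin (p 0) * sin (p 1), cos (p 0)]

lemma contDiff_sphericalCoords : ContDiff ℝ 1 sphericalCoords :=
  PiLp.contDiff_toLp.comp (contDiff_pi.2 fun i => by
    fin_cases i <;> simp only [Fin.isValue, Fin.zero_eta, Fin.mk_one, Fin.reduceFinMk,
      Matrix.cons_val_zero, Matrix.cons_val_one, Matrix.cons_val] <;> fun_prop)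

lemma sphere_subset_image_sphericalCoords :
    Metric.sphere (0 : E3) 1 ⊆ sphericalCoords '' univ.pi fun _ => Icc (-π) π := by
  intro x hx
  have hsum : x 0 ^ 2 + x 1 ^ 2 + x 2 ^ 2 = 1 := by
    have := EuclideanSpace.real_norm_sq_eq x
    rw [mem_sphere_zero_iff_norm.mp hx, Fin.sum_univ_three] at this
    linarith
  have hx2 : |x 2| ≤ 1 := abs_le_one_iff_mul_self_le_one.2 (by nlinarith)
  set z : ℂ := ⟨x 0, x 1⟩
  have hsin : sin (arccos (x 2)) = ‖z‖ := by
    rw [sin_arccos, Complex.norm_def, Complex.normSq_mk]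
    congr 1
    linarith
  refine ⟨![arccos (x 2), z.arg], fun i _ => ?_, ?_⟩
  · fin_cases i
    · show arccos (x 2) ∈ Icc (-π) π
      exact ⟨by linarith [arccos_nonneg (x 2), pi_pos], arccos_le_pi _⟩
    · show z.arg ∈ Icc (-π) π
      exact ⟨(Complex.neg_pi_lt_arg z).le, Complex.arg_le_pi z⟩
  · ext i
    fin_cases i
    · simp [sphericalCoords, hsin, Complex.norm_mul_cos_arg, z]
    · simp [sphericalCoords, hsin, Complex.norm_mul_sin_arg, z]
    · simp [sphericalCoords, cos_arccos (abs_le.1 hx2).1 (abs_le.1 hx2).2]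

lemma LocallyLipschitz.hausdorffMeasure_image_lt_top {ι X : Type*} [Fintype ι] [MetricSpace X]
    [MeasurableSpace X] [BorelSpace X] {f : (ι → ℝ) → X} (hf : LocallyLipschitz f)
    {s : Set (ι → ℝ)} (hs : IsCompact s) : μH[Fintype.card ι] (f '' s) < ⊤ := by
  obtain ⟨K, hK⟩ := hf.locallyLipschitzOn.exists_lipschitzOnWith_of_compact hs
  calc μH[Fintype.card ι] (f '' s) ≤ K ^ (Fintype.card ι : ℝ) * μH[Fintype.card ι] s :=
        hK.hausdorffMeasure_image_le (Nat.cast_nonneg _)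
    _ < ⊤ := by
        rw [hausdorffMeasure_pi_real]
        exact ENNReal.mul_lt_top (by simp) hs.measure_lt_top

instance isFiniteMeasure_sphMeas : IsFiniteMeasure sphMeas := by
  refine ⟨?_⟩
  rw [sphMeas, Measure.restrict_apply_univ]
  refine (measure_mono sphere_subset_image_sphericalCoords).trans_lt ?_
  simpa using contDiff_sphericalCoords.locallyLipschitz.hausdorffMeasure_image_lt_top
    (isCompact_univ_pi fun _ => isCompact_Icc)

lemma ae_norm_eq_one_sphMeas : ∀ᵐ ω ∂sphMeas, ‖ω‖ = 1 :=
  (ae_restrict_mem Metric.isClosed_sphere.measurableSet).mono fun _ => mem_sphere_zero_iff_norm.1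

section IteratedIntegral

variable {α β : Type*} [MeasurableSpace α] [MeasurableSpace β] {μ : Measure α} {ν : Measure β}
  [IsFiniteMeasure ν] {f : α × β → ℝ} {G : α → ℝ}

lemma integrable_prod_of_abs_le_fst [SFinite μ] (hf : AEStronglyMeasurable f (μ.prod ν))
    (hG : Integrable G μ) (hfG : ∀ᵐ p ∂μ.prod ν, |f p| ≤ G p.1) : Integrable f (μ.prod ν) :=
  (hG.comp_fst ν).mono' hf hfG

lemma abs_integral_integral_le_of_abs_le_fst [SFinite μ] (hG : Integrable G μ)
    (hfG : ∀ᵐ p ∂μ.prod ν, |f p| ≤ G p.1) :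
    |∫ x, ∫ y, f (x, y) ∂ν ∂μ| ≤ ν.real univ * ∫ x, G x ∂μ := by
  have hinner : ∀ᵐ x ∂μ, ‖∫ y, f (x, y) ∂ν‖ ≤ ν.real univ * G x :=
    (Measure.ae_ae_of_ae_prod hfG).mono fun x hx => by
      rw [mul_comm]
      exact norm_integral_le_of_norm_le_const hx
  rw [← integral_const_mul, ← Real.norm_eq_abs]
  exact norm_integral_le_of_norm_le (hG.const_mul _) hinner

end IteratedIntegral

lemma norm_sq_add_norm_sq_collision {V : Type*} [NormedAddCommGroup V] [InnerProductSpace ℝ V]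
    (u v ω : V) (hω : ‖ω‖ = 1) :
    ‖u + ⟪v - u, ω⟫ • ω‖ ^ 2 + ‖v - ⟪v - u, ω⟫ • ω‖ ^ 2 = ‖u‖ ^ 2 + ‖v‖ ^ 2 := by
  rw [norm_add_sq_real, norm_sub_sq_real, norm_smul, hω, real_inner_smul_right,
    real_inner_smul_right, inner_sub_left, Real.norm_eq_abs, mul_one, sq_abs]
  ring

def gainIntegrand (g : E3 → ℝ) (v : E3) : E3 × E3 → ℝ :=
  {p : E3 × E3 | 0 < ⟪v - p.1, p.2⟫}.indicator fun p =>
    |⟪v - p.1, p.2⟫|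
      * exp (-(‖p.1 + ⟪v - p.1, p.2⟫ • p.2‖ ^ 2 / 4))
        * g (p.1 + ⟪v - p.1, p.2⟫ • p.2)
      * exp (-(‖v - ⟪v - p.1, p.2⟫ • p.2‖ ^ 2 / 4))
        * g (v - ⟪v - p.1, p.2⟫ • p.2)

lemma measurable_gainIntegrand {g : E3 → ℝ} (hg : Measurable g) (v : E3) :
    Measurable (gainIntegrand g v) :=
  Measurable.indicator (by fun_prop) (measurableSet_lt measurable_const (by fun_prop))

lemma gainOp_eq_integral_integral_gainIntegrand (g : E3 → ℝ) (v : E3) :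
    gainOp g v = exp (‖v‖ ^ 2 / 4) * ∫ u, ∫ ω, gainIntegrand g v (u, ω) ∂sphMeas := by
  rw [gainOp]
  congr 1
  refine integral_congr_ae (ae_of_all _ fun u => ?_)
  exact (integral_indicator (measurableSet_lt measurable_const (by fun_prop))).symm

lemma abs_gainIntegrand_le {g : E3 → ℝ} {ϑ M : ℝ}
    (hg : ∀ x, |g x| ≤ M * exp (-(ϑ * ‖x‖ ^ 2))) (v : E3) {p : E3 × E3} (hp : ‖p.2‖ = 1) :
    |gainIntegrand g v p| ≤
      M ^ 2 * ((‖p.1‖ + ‖v‖) * exp (-((1 / 4 + ϑ) * (‖p.1‖ ^ 2 + ‖v‖ ^ 2)))) := by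
  obtain ⟨u, ω⟩ := p
  dsimp only at hp ⊢
  have hM : 0 ≤ M := nonneg_of_mul_nonneg_left ((abs_nonneg _).trans (hg 0)) (exp_pos _)
  have ht : |⟪v - u, ω⟫| ≤ ‖u‖ + ‖v‖ := by
    calc |⟪v - u, ω⟫| ≤ ‖v - u‖ * ‖ω‖ := abs_real_inner_le_norm _ _
      _ ≤ ‖u‖ + ‖v‖ := by rw [hp, mul_one, add_comm]; exact norm_sub_le _ _
  have hexp := norm_sq_add_norm_sq_collision u v ω hp
  unfold gainIntegrand
  by_cases hmem : (u, ω) ∈ {p : E3 × E3 | 0 < ⟪v - p.1, p.2⟫}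
  · rw [indicator_of_mem hmem]
    dsimp only
    set t := ⟪v - u, ω⟫
    set a := u + t • ω
    set b := v - t • ω
    calc |(|t| * exp (-(‖a‖ ^ 2 / 4)) * g a * exp (-(‖b‖ ^ 2 / 4)) * g b)|
        = |t| * (|g a| * |g b|) * (exp (-(‖a‖ ^ 2 / 4)) * exp (-(‖b‖ ^ 2 / 4))) := by
          simp only [abs_mul, abs_abs, abs_of_pos (exp_pos _)]
          ring
      _ ≤ (‖u‖ + ‖v‖) * (M * exp (-(ϑ * ‖a‖ ^ 2)) * (M * exp (-(ϑ * ‖b‖ ^ 2))))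
            * (exp (-(‖a‖ ^ 2 / 4)) * exp (-(‖b‖ ^ 2 / 4))) := by
          gcongr
          exacts [hg a, hg b]
      _ = M ^ 2 * ((‖u‖ + ‖v‖) * exp (-((1 / 4 + ϑ) * (‖u‖ ^ 2 + ‖v‖ ^ 2)))) := by
          have hsplit : exp (-((1 / 4 + ϑ) * (‖a‖ ^ 2 + ‖b‖ ^ 2))) = exp (-(ϑ * ‖a‖ ^ 2))
              * exp (-(ϑ * ‖b‖ ^ 2)) * (exp (-(‖a‖ ^ 2 / 4)) * exp (-(‖b‖ ^ 2 / 4))) := by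
            rw [← exp_add, ← exp_add, ← exp_add]
            ring_nf
          rw [← hexp, hsplit]
          ring
  · rw [indicator_of_notMem hmem, abs_zero]
    positivity

lemma add_mul_exp_neg_mul_sq_add_sq_le {ϑ x y : ℝ} (hϑ : 0 < ϑ) :
    (x + y) * exp (-((1 / 4 + ϑ) * (x ^ 2 + y ^ 2)))
      ≤ 9 * ((ϑ + 1) / ϑ) * exp (-(y ^ 2 / 4)) * exp (-(1 / 8 * x ^ 2)) := by
  have hxy : x + y ≤ (1 + x ^ 2) * (1 + y ^ 2) := by
    nlinarith [sq_nonneg (x - 1 / 2), sq_nonneg (y - 1 / 2),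
      mul_nonneg (sq_nonneg x) (sq_nonneg y)]
  have hsplit : exp (-((1 / 4 + ϑ) * (x ^ 2 + y ^ 2))) ≤ exp (-(ϑ * y ^ 2)) * exp (-(y ^ 2 / 4))
      * (exp (-(1 / 8 * x ^ 2)) * exp (-(1 / 8 * x ^ 2))) := by
    rw [← exp_add, ← exp_add, ← exp_add, exp_le_exp]
    nlinarith [mul_nonneg hϑ.le (sq_nonneg x)]
  have hx := one_add_mul_exp_neg_mul_le (c := 1 / 8) (by norm_num) (sq_nonneg x)
  have hy := one_add_mul_exp_neg_mul_le hϑ (sq_nonneg y)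
  norm_num at hx
  calc (x + y) * exp (-((1 / 4 + ϑ) * (x ^ 2 + y ^ 2)))
      ≤ (1 + x ^ 2) * (1 + y ^ 2) * (exp (-(ϑ * y ^ 2)) * exp (-(y ^ 2 / 4))
          * (exp (-(1 / 8 * x ^ 2)) * exp (-(1 / 8 * x ^ 2)))) :=
        mul_le_mul hxy hsplit (exp_pos _).le (by positivity)
    _ = ((1 + x ^ 2) * exp (-(1 / 8 * x ^ 2))) * ((1 + y ^ 2) * exp (-(ϑ * y ^ 2)))
          * exp (-(y ^ 2 / 4)) * exp (-(1 / 8 * x ^ 2)) := by ring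
    _ ≤ 9 * ((ϑ + 1) / ϑ) * exp (-(y ^ 2 / 4)) * exp (-(1 / 8 * x ^ 2)) := by gcongr

theorem gain_term_pointwise_bound_general (ϑ : ℝ) (hϑ0 : 0 < ϑ) :
    ∃ C > (0 : ℝ), ∀ (g : E3 → ℝ) (M : ℝ), Measurable g →
      (∀ u : E3, |Real.exp (ϑ * ‖u‖ ^ 2) * g u| ≤ M) →
      ∀ v : E3,
        Integrable
          ({p : E3 × E3 | 0 < ⟪v - p.1, p.2⟫}.indicator fun p =>
            |⟪v - p.1, p.2⟫|
              * Real.exp (-(‖p.1 + ⟪v - p.1, p.2⟫ • p.2‖ ^ 2 / 4))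
                * g (p.1 + ⟪v - p.1, p.2⟫ • p.2)
              * Real.exp (-(‖v - ⟪v - p.1, p.2⟫ • p.2‖ ^ 2 / 4))
                * g (v - ⟪v - p.1, p.2⟫ • p.2))
          ((volume : Measure E3).prod sphMeas)
        ∧ |gainOp g v| ≤ C * M ^ 2 := by
  set K := 9 * ((ϑ + 1) / ϑ)
  set A := ∫ u : E3, exp (-(1 / 8 * ‖u‖ ^ 2))
  refine ⟨sphMeas.real univ * K * A + 1, by positivity, fun g M hg hgM v => ?_⟩
  set G : E3 → ℝ := fun u => M ^ 2 * K * exp (-(‖v‖ ^ 2 / 4)) * exp (-(1 / 8 * ‖u‖ ^ 2))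
  have hG : Integrable G := (integrable_exp_neg_mul_sq_norm (by norm_num)).const_mul _
  have hbound : ∀ᵐ p ∂(volume : Measure E3).prod sphMeas, |gainIntegrand g v p| ≤ G p.1 :=
    (Measure.quasiMeasurePreserving_snd.ae ae_norm_eq_one_sphMeas).mono fun p hp =>
      (abs_gainIntegrand_le (fun x => abs_le_mul_exp_neg_of_abs_exp_mul_le (hgM x)) v hp).trans
        ((mul_le_mul_of_nonneg_left (add_mul_exp_neg_mul_sq_add_sq_le hϑ0) (sq_nonneg M)).trans_eq
          (by ring))
  refine ⟨integrable_prod_of_abs_le_fst (measurable_gainIntegrand hg v).aestronglyMeasurable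
    hG hbound, ?_⟩
  have hcancel : exp (‖v‖ ^ 2 / 4) * exp (-(‖v‖ ^ 2 / 4)) = 1 := by
    rw [← exp_add, add_neg_cancel, exp_zero]
  calc |gainOp g v| = exp (‖v‖ ^ 2 / 4) * |∫ u, ∫ ω, gainIntegrand g v (u, ω) ∂sphMeas| := by
        rw [gainOp_eq_integral_integral_gainIntegrand, abs_mul, abs_of_pos (exp_pos _)]
    _ ≤ exp (‖v‖ ^ 2 / 4) * (sphMeas.real univ * ∫ u, G u) := by
        gcongr
        exact abs_integral_integral_le_of_abs_le_fst hG hbound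
    _ = sphMeas.real univ * K * A * M ^ 2 := by
        rw [integral_const_mul]
        linear_combination (sphMeas.real univ * K * A * M ^ 2) * hcancel
    _ ≤ (sphMeas.real univ * K * A + 1) * M ^ 2 := by nlinarith [sq_nonneg M]

/-- **Lemma 2.1, inequality (gamma_upper)** (pointwise bound on the gain term).
Let `0 < ϑ < 1/4` and `w v = e^{ϑ|v|²}`. There is `C = C(ϑ) > 0` such that for every
measurable `g` with `|w·g| ≤ M` and every `v`, the gain integral converges absolutely
(over the product of Lebesgue measure and the sphere measure) and
`|Γ_gain(g,g)(v)| ≤ C M²`. -/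
theorem gain_term_pointwise_bound (ϑ : ℝ) (hϑ0 : 0 < ϑ) (hϑ1 : ϑ < 1 / 4) :
    ∃ C > (0 : ℝ), ∀ (g : E3 → ℝ) (M : ℝ), Measurable g →
      (∀ u : E3, |Real.exp (ϑ * ‖u‖ ^ 2) * g u| ≤ M) →
      ∀ v : E3,
        Integrable
          ({p : E3 × E3 | 0 < ⟪v - p.1, p.2⟫}.indicator fun p =>
            |⟪v - p.1, p.2⟫|
              * Real.exp (-(‖p.1 + ⟪v - p.1, p.2⟫ • p.2‖ ^ 2 / 4))
                * g (p.1 + ⟪v - p.1, p.2⟫ • p.2)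
              * Real.exp (-(‖v - ⟪v - p.1, p.2⟫ • p.2‖ ^ 2 / 4))
                * g (v - ⟪v - p.1, p.2⟫ • p.2))
          ((volume : Measure E3).prod sphMeas)
        ∧ |gainOp g v| ≤ C * M ^ 2 :=
  gain_term_pointwise_bound_general ϑ hϑ0

end
end

section
/- Exponentially damped logarithmic time integral (key calculus estimate in the proof of Lemma 5.7). There exists a universal constant C > 0 such that for all λ > 0, b > 0 and T ≥ 0: ∫₀^T e^{−λ(T−s)} ln( 1 + 1/(b(T−s)) ) ds ≤ (C/λ) · ( ln(1 + λ/b) + 1 ). -/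
/-!
Substituting `v = λ(T - s)` turns the integral into `λ⁻¹ ∫₀^{λT} e^{-v} ln(1 + a/v) dv` with
`a = λ/b`. Since `1 + xy ≤ (1 + x)(1 + y)`, the logarithm is at most `ln(1 + a) + ln(1 + 1/v)`,
and `ln(1 + 1/v) ≤ 2 v^{-1/2}`; the integrals of `e^{-v}` and `e^{-v} v^{-1/2}` over `(0, ∞)` are
`Γ(1) = 1` and `Γ(1/2) = √π`, so `C = 2√π + 1` works.
-/

open MeasureTheory Set Real

lemma log_one_add_inv_le {v : ℝ} (hv : 0 < v) : log (1 + v⁻¹) ≤ 2 * v ^ (-(1 / 2) : ℝ) := by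
  set w := v ^ (-(1 / 2) : ℝ)
  have hw2 : w ^ 2 = v⁻¹ := by
    rw [← rpow_natCast, ← rpow_mul hv.le]; norm_num [rpow_neg_one]
  have hw : 0 ≤ w := by positivity
  rw [log_le_iff_le_exp (by positivity), ← hw2, two_mul, exp_add]
  nlinarith [add_one_le_exp w]

lemma log_one_add_mul_le_add {x y : ℝ} (hx : 0 ≤ x) (hy : 0 ≤ y) :
    log (1 + x * y) ≤ log (1 + x) + log (1 + y) := by
  rw [← log_mul (by positivity) (by positivity)]
  exact log_le_log (by positivity) (by nlinarith)

lemma log_one_add_div_le {a v : ℝ} (ha : 0 ≤ a) (hv : 0 < v) :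
    log (1 + a / v) ≤ log (1 + a) + 2 * v ^ (-(1 / 2) : ℝ) := by
  grw [div_eq_mul_inv, log_one_add_mul_le_add ha (inv_nonneg.2 hv.le), log_one_add_inv_le hv]

lemma setIntegral_exp_neg_mul_log_one_add_div_le {a : ℝ} (ha : 0 ≤ a) {R : ℝ} :
    ∫ v in Ioc 0 R, exp (-v) * log (1 + a / v) ≤ log (1 + a) + 2 * √π := by
  -- the majorant, written with the Euler integrands `exp (-v) * v ^ (s - 1)` of `Γ 1` and `Γ (1/2)`
  set g : ℝ → ℝ := fun v ↦ log (1 + a) * (exp (-v) * v ^ ((1 : ℝ) - 1))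
    + 2 * (exp (-v) * v ^ ((1 / 2 : ℝ) - 1))
  have hg : IntegrableOn g (Ioi 0) :=
    ((GammaIntegral_convergent one_pos).const_mul _).add
      ((GammaIntegral_convergent one_half_pos).const_mul _)
  have hg_nonneg : ∀ v ∈ Ioi (0 : ℝ), 0 ≤ g v := fun v hv ↦ by
    have hlog := log_nonneg (le_add_of_nonneg_right ha)
    have hv : (0 : ℝ) < v := hv
    positivity
  calc ∫ v in Ioc 0 R, exp (-v) * log (1 + a / v)
      ≤ ∫ v in Ioc 0 R, g v := by
        refine integral_mono_of_nonneg ?_ (hg.mono_set Ioc_subset_Ioi_self) ?_ <;>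
          filter_upwards [ae_restrict_mem measurableSet_Ioc] with v hv
        · have := log_nonneg (le_add_of_nonneg_right (div_nonneg ha hv.1.le))
          positivity
        · grw [log_one_add_div_le ha hv.1]
          exact le_of_eq (by norm_num [g]; ring)
    _ ≤ ∫ v in Ioi 0, g v :=
        setIntegral_mono_set hg ((ae_restrict_mem measurableSet_Ioi).mono hg_nonneg)
          Ioc_subset_Ioi_self.eventuallyLE
    _ = log (1 + a) + 2 * √π := by
        rw [integral_add ((GammaIntegral_convergent one_pos).const_mul _)
            ((GammaIntegral_convergent one_half_pos).const_mul _), integral_const_mul,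
          integral_const_mul, ← Gamma_eq_integral one_pos, ← Gamma_eq_integral one_half_pos,
          Gamma_one, Gamma_one_half_eq, mul_one]

/-- **Key calculus estimate in the proof of Lemma 5.7** (exponentially damped
logarithmic time integral). There is a universal constant `C > 0` such that for all
`λ > 0`, `b > 0` and `T ≥ 0`,
`∫₀^T e^{−λ(T−s)} ln(1 + 1/(b(T−s))) ds ≤ (C/λ)(ln(1 + λ/b) + 1)`. -/
theorem damped_log_time_integral :
    ∃ C > (0 : ℝ), ∀ lam b T : ℝ, 0 < lam → 0 < b → 0 ≤ T →
      (∫ s in (0 : ℝ)..T,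
          Real.exp (-(lam * (T - s))) * Real.log (1 + 1 / (b * (T - s))))
        ≤ C / lam * (Real.log (1 + lam / b) + 1) := by
  refine ⟨2 * √π + 1, by positivity, fun lam b T hlam hb hT ↦ ?_⟩
  have hscale : ∫ s in (0 : ℝ)..T, exp (-(lam * (T - s))) * log (1 + 1 / (b * (T - s)))
      = lam⁻¹ * ∫ v in Ioc 0 (lam * T), exp (-v) * log (1 + lam / b / v) := by
    rw [← intervalIntegral.integral_of_le (by positivity)]
    have hsub := intervalIntegral.integral_comp_sub_mul
      (fun v ↦ exp (-v) * log (1 + lam / b / v)) (a := 0) (b := T) hlam.ne' (lam * T)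
    simp only [mul_zero, sub_zero, sub_self, smul_eq_mul, ← mul_sub] at hsub
    rw [← hsub]
    congr with s
    rw [div_div, mul_left_comm, div_mul_cancel_left₀ hlam.ne', one_div]
  have hL : 0 ≤ log (1 + lam / b) := log_nonneg (le_add_of_nonneg_right (by positivity))
  calc _ = lam⁻¹ * ∫ v in Ioc 0 (lam * T), exp (-v) * log (1 + lam / b / v) := hscale
    _ ≤ lam⁻¹ * (log (1 + lam / b) + 2 * √π) := by
        grw [setIntegral_exp_neg_mul_log_one_add_div_le (by positivity)]
    _ ≤ (2 * √π + 1) / lam * (log (1 + lam / b) + 1) := by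
        rw [div_mul_eq_mul_div, inv_mul_eq_div]
        gcongr
        nlinarith [sqrt_nonneg π]
end
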